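/- arXiv:2311.01609 — 2 statements merged into one kernel-verified Lean document; each statement's English description precedes it below -/
import Mathlib

section
/- Let n be a natural number, X and Y arbitrary types, and f : X → Multiset X → Y a shared individual policy that assigns to an agent an action based on the agent's own observation and the multiset of observations of its teammates. Define the joint policy F : (Fin n → X) → (Fin n → Y) by F s i = f (s i) M_i, where M_i is the multiset of values s j over all indices j ≠ i. Then for every permutation σ of Fin n and every joint state s : Fin n → X, one has F (s ∘ σ) = (F s) ∘ σ; that is, parameter-symmetric individual policies make the joint policy an equivariant map with respect to permutations of the agents. -/
/-- The joint policy built from a shared individual policy `f`: agent `i` acts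
from its own observation `s i` and the multiset of its teammates' observations. -/
def jointPolicy {n : ℕ} {X Y : Type*} (f : X → Multiset X → Y)
    (s : Fin n → X) (i : Fin n) : Y :=
  f (s i) ((Finset.univ.erase i).val.map s)

theorem joint_policy_equivariant {n : ℕ} {X Y : Type*} (f : X → Multiset X → Y)
    (σ : Equiv.Perm (Fin n)) (s : Fin n → X) :
    jointPolicy f (s ∘ σ) = (jointPolicy f s) ∘ σ := by
  funext i
  simp only [jointPolicy, Function.comp_apply]
  congr 1
  have h : (Finset.univ.erase i).map σ.toEmbedding = Finset.univ.erase (σ i) := by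
    rw [Finset.map_erase]
    simp [Finset.map_univ_equiv]
  calc ((Finset.univ.erase i).val.map (s ∘ σ))
      = (((Finset.univ.erase i).val.map σ).map s) := by rw [Multiset.map_map]
    _ = (Finset.univ.erase (σ i)).val.map s := by
        rw [← h]; rfl
end

section
/- Let n be a natural number, S and A finite types, and let the symmetric group of permutations of Fin n act on S and on A. Let P0 : S → ℝ, π : S → A → ℝ, and P : S → A → S → ℝ satisfy the invariances P0 (σ • s) = P0 s, π (σ • s) (σ • a) = π s a, and P (σ • s) (σ • a) (σ • s') = P s a s' for all permutations σ of Fin n. Let R : S → (Fin n → ℝ) be an equivariant vectorial reward, i.e., R (σ • s) = (R s) ∘ σ⁻¹ for all σ and s. Fix a horizon T ≥ 1, and define the probability that the team obtains reward vector v : Fin n → ℝ as the sum, over all state sequences τ : Fin (T+1) → S with R (τ T) = v and all action sequences α : Fin T → A, of the trajectory weight P0(τ 0) · ∏_{t < T} π (τ t) (α t) · P (τ t) (α t) (τ (t+1)). Then this reward distribution is exchangeable: for every v : Fin n → ℝ and every permutation σ of Fin n, the probability of obtaining reward vector v equals the probability of obtaining reward vector v ∘ σ. -/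
open scoped Classical

/-- The probability that the team obtains reward vector `v` after a horizon-`T`
trajectory: the sum over all trajectories whose terminal state has reward vector `v`
of the trajectory weight. -/
noncomputable def rewardProb {n : ℕ} {S A : Type*} [Fintype S] [Fintype A]
    (P0 : S → ℝ) (π : S → A → ℝ) (P : S → A → S → ℝ)
    (R : S → (Fin n → ℝ)) (T : ℕ) (v : Fin n → ℝ) : ℝ :=
  ∑ τ : Fin (T + 1) → S, ∑ α : Fin T → A,
    if R (τ (Fin.last T)) = v then
      P0 (τ 0) *
        ∏ t : Fin T, π (τ t.castSucc) (α t) * P (τ t.castSucc) (α t) (τ t.succ)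
    else 0

theorem rewardProb_exchangeable {n : ℕ} {S A : Type*} [Fintype S] [Fintype A]
    [MulAction (Equiv.Perm (Fin n)) S] [MulAction (Equiv.Perm (Fin n)) A]
    (P0 : S → ℝ) (π : S → A → ℝ) (P : S → A → S → ℝ) (R : S → (Fin n → ℝ))
    (hP0 : ∀ (σ : Equiv.Perm (Fin n)) (s : S), P0 (σ • s) = P0 s)
    (hπ : ∀ (σ : Equiv.Perm (Fin n)) (s : S) (a : A), π (σ • s) (σ • a) = π s a)
    (hP : ∀ (σ : Equiv.Perm (Fin n)) (s : S) (a : A) (s' : S),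
      P (σ • s) (σ • a) (σ • s') = P s a s')
    (hR : ∀ (σ : Equiv.Perm (Fin n)) (s : S), R (σ • s) = (R s) ∘ ⇑σ⁻¹)
    (T : ℕ) (hT : 1 ≤ T) (v : Fin n → ℝ) (σ : Equiv.Perm (Fin n)) :
    rewardProb P0 π P R T v = rewardProb P0 π P R T (v ∘ σ) := by
  unfold rewardProb
  refine Fintype.sum_equiv
    (Equiv.arrowCongr (Equiv.refl (Fin (T+1))) (MulAction.toPerm σ⁻¹)) _ _ ?_
  intro τ
  refine Fintype.sum_equiv
    (Equiv.arrowCongr (Equiv.refl (Fin T)) (MulAction.toPerm σ⁻¹)) _ _ ?_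
  intro α
  simp only [Equiv.arrowCongr_apply, Equiv.coe_refl, Function.comp,
    MulAction.toPerm_apply, Equiv.refl_symm, id]
  have hcond : (R (τ (Fin.last T)) = v) ↔ (R (σ⁻¹ • τ (Fin.last T)) = v ∘ ⇑σ) := by
    rw [hR, inv_inv]
    constructor
    · intro h; rw [h]
    · intro h
      funext i
      have := congrFun h (σ⁻¹ i)
      simpa using this
  rw [if_congr hcond rfl rfl, hP0]
  simp [hπ, hP]
end
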